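/- Let H be a nontrivial module of G and F = f(G,H,h) the quotient with w_F(h) = χ_w(G[H]). Then χ_w(G) ≤ χ_w(F). -/

import Mathlib

variable {V : Type*} [Fintype V] [DecidableEq V]

/-- A stable (independent) set. -/
def IsStable (G : SimpleGraph V) (s : Set V) : Prop :=
  ∀ a ∈ s, ∀ b ∈ s, ¬ G.Adj a b

/-- A weighted coloring, given as a multiplicity function on finsets of vertices. -/
def IsWC (G : SimpleGraph V) (w : V → ℕ) (c : Finset V → ℕ) : Prop :=
  (∀ S : Finset V, c S ≠ 0 → IsStable G (S : Set V)) ∧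
  ∀ v : V, w v ≤ ∑ S : Finset V, (if v ∈ S then c S else 0)

/-- The cost of a weighted coloring. -/
def WCcost (c : Finset V → ℕ) : ℕ := ∑ S : Finset V, c S

/-- The weighted chromatic number. -/
noncomputable def chiW (G : SimpleGraph V) (w : V → ℕ) : ℕ :=
  sInf { n : ℕ | ∃ c : Finset V → ℕ, IsWC G w c ∧ n = WCcost c }

/-- A module of a graph. -/
def IsModule (G : SimpleGraph V) (H : Finset V) : Prop :=
  ∀ v ∉ H, (∀ u ∈ H, G.Adj v u) ∨ (∀ u ∈ H, ¬ G.Adj v u)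

def NontrivialModule (G : SimpleGraph V) (H : Finset V) : Prop :=
  IsModule G H ∧ 1 < H.card ∧ H.card < Fintype.card V

/-- The quotient graph f(G,H,h): `none` plays the role of the contracted vertex h. -/
def quotientGraph (G : SimpleGraph V) (H : Finset V) :
    SimpleGraph (Option {v : V // v ∉ H}) where
  Adj x y :=
    match x, y with
    | some a, some b => G.Adj a.1 b.1
    | some a, none => ∃ u ∈ H, G.Adj a.1 u
    | none, some b => ∃ u ∈ H, G.Adj b.1 u
    | none, none => False
  symm := by
    constructor
    rintro (a | a) (b | b) hab
    · exact hab
    · exact hab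
    · exact hab
    · exact hab.symm
  loopless := by
    constructor
    rintro (a | a) hab
    · exact hab
    · exact G.irrefl hab

/-- Weights on the quotient graph: h gets the weighted chromatic number of G[H]. -/
noncomputable def quotientWeights (G : SimpleGraph V) (w : V → ℕ) (H : Finset V) :
    Option {v : V // v ∉ H} → ℕ :=
  fun x => match x with
  | none => chiW (G.induce (H : Set V)) (fun v => w v.1)
  | some a => w a.1

def Prime' (G : SimpleGraph V) : Prop :=
  ∀ H : Finset V, IsModule G H → H.card ≤ 1 ∨ H = Finset.univ

def IsBuoy (G : SimpleGraph V) (S : Fin 5 → Finset V) : Prop :=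
  (∀ i, (S i).Nonempty) ∧
  (∀ v : V, ∃! i, v ∈ S i) ∧
  (∀ i, ∀ a ∈ S i, ∀ b ∈ S (i + 1), G.Adj a b) ∧
  (∀ i, ∀ a ∈ S i, ∀ b ∈ S (i + 2), ¬ G.Adj a b)

/-!
Take a minimum weighted coloring of `F` and one of `G[H]`. The multiplicity of the stable sets
of `F` through `h` is at least `w_F(h) = χ_w(G[H])`, the number of stable sets (with multiplicity)
of the coloring of `G[H]`, so these can be matched injectively with stable sets of `F` through `h`.
Replacing `h` by the matched set (or by nothing) turns every stable set of `F` into a stable set of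
`G`, because a vertex outside `H` that is non-adjacent to `h` in `F` has no neighbour in `H`. The
result is a weighted coloring of `G` of cost `χ_w(F)`.
-/

theorem Multiset.exists_matching_of_card_le_countP {α β : Type*} (p : α → Prop) [DecidablePred p]
    (Q : Multiset β) (P : Multiset α) (hQP : card Q ≤ P.countP p) :
    ∃ (T : Multiset (α × β)) (U : Multiset α),
      T.map Prod.snd = Q ∧ T.map Prod.fst + U = P ∧ ∀ t ∈ T, p t.1 := by
  induction Q using Multiset.induction generalizing P with
  | empty => exact ⟨0, P, rfl, zero_add P, by simp⟩
  | cons b Q ih =>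
    obtain ⟨a, haP, ha⟩ : ∃ a ∈ P, p a := Multiset.countP_pos.mp (by simp at hQP; omega)
    obtain ⟨P', rfl⟩ := Multiset.exists_cons_of_mem haP
    obtain ⟨T, U, hT, hTU, hTp⟩ := ih P' (by simp [ha] at hQP; omega)
    refine ⟨(a, b) ::ₘ T, U, by simp [hT], by simp [← hTU], ?_⟩
    simpa [ha] using hTp

theorem Multiset.exists_count_eq {α : Type*} [Finite α] [DecidableEq α] (c : α → ℕ) :
    ∃ M : Multiset α, (M.count ·) = c :=
  ⟨_, funext (Finsupp.count_toMultiset (Finsupp.equivFunOnFinite.symm c))⟩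

section MultisetColoring

variable (G : SimpleGraph V) (w : V → ℕ)

def IsWCMultiset (M : Multiset (Finset V)) : Prop :=
  (∀ S ∈ M, IsStable G (S : Set V)) ∧ ∀ v : V, w v ≤ M.countP (v ∈ ·)

variable {G w}

theorem isWC_count_iff {M : Multiset (Finset V)} :
    IsWC G w (M.count ·) ↔ IsWCMultiset G w M := by
  have hcountP (v : V) : ∑ S : Finset V, (if v ∈ S then M.count S else 0) = M.countP (v ∈ ·) := by
    rw [Multiset.countP_eq_card_filter, ← Multiset.sum_count_eq_card fun S _ => Finset.mem_univ S]
    simp only [Multiset.count_filter]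
  simp only [IsWC, IsWCMultiset, hcountP, ne_eq, Multiset.count_eq_zero, not_not]

theorem WCcost_count (M : Multiset (Finset V)) : WCcost (M.count ·) = Multiset.card M :=
  Multiset.sum_count_eq_card fun S _ => Finset.mem_univ S

theorem chiW_le_card {M : Multiset (Finset V)} (hM : IsWCMultiset G w M) :
    chiW G w ≤ Multiset.card M :=
  WCcost_count M ▸ Nat.sInf_le ⟨_, isWC_count_iff.mpr hM, rfl⟩

variable (G w) in
theorem exists_isWCMultiset : ∃ M, IsWCMultiset G w M := by
  obtain ⟨N, hN⟩ := Multiset.exists_count_eq w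
  refine ⟨N.map ({·}), fun S hS a ha b hb => ?_, fun v => ?_⟩
  · obtain ⟨u, -, rfl⟩ := Multiset.mem_map.mp hS
    simp only [Finset.coe_singleton, Set.mem_singleton_iff] at ha hb
    exact ha ▸ hb ▸ G.irrefl
  · simp [Multiset.countP_map, Multiset.filter_eq, ← hN]

variable (G w) in
theorem exists_isWCMultiset_card_eq_chiW :
    ∃ M : Multiset (Finset V), IsWCMultiset G w M ∧ Multiset.card M = chiW G w := by
  obtain ⟨M₀, hM₀⟩ := exists_isWCMultiset G w
  obtain ⟨c, hc, hcost⟩ := Nat.sInf_mem (s := {n | ∃ c, IsWC G w c ∧ n = WCcost c})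
    ⟨_, _, isWC_count_iff.mpr hM₀, rfl⟩
  obtain ⟨M, rfl⟩ := Multiset.exists_count_eq c
  exact ⟨M, isWC_count_iff.mp hc, by rw [← WCcost_count, chiW, hcost]⟩

end MultisetColoring

section Substitution

omit [Fintype V]

variable {G : SimpleGraph V} {H : Finset V}

variable (H) in
def substituteSet (S : Finset (Option {v : V // v ∉ H})) (A : Finset (H : Set V)) : Finset V :=
  S.eraseNone.map (Function.Embedding.subtype _) ∪ A.map (Function.Embedding.subtype _)

theorem mem_substituteSet_of_notMem {S : Finset (Option {v : V // v ∉ H})} {A : Finset (H : Set V)}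
    {v : V} (hv : v ∉ H) : v ∈ substituteSet H S A ↔ some ⟨v, hv⟩ ∈ S := by
  simp [substituteSet, hv]

theorem mem_substituteSet_of_mem {S : Finset (Option {v : V // v ∉ H})} {A : Finset (H : Set V)}
    {v : V} (hv : v ∈ H) : v ∈ substituteSet H S A ↔ ⟨v, hv⟩ ∈ A := by
  simp [substituteSet, hv]

theorem isStable_substituteSet {S : Finset (Option {v : V // v ∉ H})} {A : Finset (H : Set V)}
    (hS : IsStable (quotientGraph G H) (S : Set _)) (hA : IsStable (G.induce H) (A : Set _))
    (hAS : A.Nonempty → none ∈ S) : IsStable G (substituteSet H S A : Set V) := by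
  have outside_inside {a b : V} (ha : a ∉ H) (hb : b ∈ H) (haS : some ⟨a, ha⟩ ∈ S)
      (hbA : ⟨b, hb⟩ ∈ A) : ¬ G.Adj a b :=
    fun hab => hS _ haS _ (hAS ⟨_, hbA⟩) ⟨b, hb, hab⟩
  intro a ha b hb
  by_cases haH : a ∈ H <;> by_cases hbH : b ∈ H
  · exact hA _ ((mem_substituteSet_of_mem haH).mp ha) _ ((mem_substituteSet_of_mem hbH).mp hb)
  · exact fun hab => outside_inside hbH haH ((mem_substituteSet_of_notMem hbH).mp hb)
      ((mem_substituteSet_of_mem haH).mp ha) hab.symm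
  · exact outside_inside haH hbH ((mem_substituteSet_of_notMem haH).mp ha)
      ((mem_substituteSet_of_mem hbH).mp hb)
  · exact hS _ ((mem_substituteSet_of_notMem haH).mp ha) _ ((mem_substituteSet_of_notMem hbH).mp hb)

theorem isWCMultiset_substituteSet {w : V → ℕ} {T : Multiset (Finset (Option {v : V // v ∉ H}) ×
      Finset (H : Set V))} {U : Multiset (Finset (Option {v : V // v ∉ H}))}
    (hF : IsWCMultiset (quotientGraph G H) (quotientWeights G w H) (T.map Prod.fst + U))
    (hH : IsWCMultiset (G.induce H) (fun v => w v.1) (T.map Prod.snd)) (hT : ∀ t ∈ T, none ∈ t.1) :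
    IsWCMultiset G w (T.map (fun t => substituteSet H t.1 t.2) + U.map (substituteSet H · ∅)) := by
  refine ⟨?stable, fun v => ?cover⟩
  case stable =>
    simp only [Multiset.mem_add, Multiset.mem_map]
    rintro _ (⟨t, ht, rfl⟩ | ⟨S, hS, rfl⟩)
    · have hSF : t.1 ∈ T.map Prod.fst + U :=
        Multiset.mem_add.mpr (.inl (Multiset.mem_map_of_mem _ ht))
      exact isStable_substituteSet (hF.1 _ hSF) (hH.1 _ (Multiset.mem_map_of_mem _ ht))
        fun _ => hT t ht
    · exact isStable_substituteSet (hF.1 _ (Multiset.mem_add.mpr (.inr hS))) (by simp [IsStable])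
        (by simp)
  case cover =>
    by_cases hv : v ∈ H
    · simpa [mem_substituteSet_of_mem hv, Multiset.countP_map, ← Multiset.countP_eq_card_filter]
        using hH.2 ⟨v, hv⟩
    · simpa [mem_substituteSet_of_notMem hv, Multiset.countP_map, ← Multiset.countP_eq_card_filter,
        quotientWeights] using hF.2 (some ⟨v, hv⟩)

end Substitution

theorem chiW_le_quotient_general (G : SimpleGraph V) (w : V → ℕ) (H : Finset V) :
    chiW G w ≤ chiW (quotientGraph G H) (quotientWeights G w H) := by
  obtain ⟨MF, hMF, hcardF⟩ :=
    exists_isWCMultiset_card_eq_chiW (quotientGraph G H) (quotientWeights G w H)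
  obtain ⟨MH, hMH, hcardH⟩ := exists_isWCMultiset_card_eq_chiW (G.induce H) (fun v => w v.1)
  have hcover_h : Multiset.card MH ≤ MF.countP (none ∈ ·) := hcardH ▸ hMF.2 none
  obtain ⟨T, U, rfl, rfl, hT⟩ :=
    Multiset.exists_matching_of_card_le_countP (none ∈ ·) MH MF hcover_h
  calc chiW G w
      ≤ Multiset.card (T.map (fun t => substituteSet H t.1 t.2) + U.map (substituteSet H · ∅)) :=
        chiW_le_card (isWCMultiset_substituteSet hMF hMH hT)
    _ = Multiset.card (T.map Prod.fst + U) := by simp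
    _ = _ := hcardF

/-- χ_w(G) ≤ χ_w(F) for the quotient F = f(G,H,h). -/
theorem chiW_le_quotient (G : SimpleGraph V) (w : V → ℕ) (H : Finset V)
    (hH : NontrivialModule G H) :
    chiW G w ≤ chiW (quotientGraph G H) (quotientWeights G w H) :=
  chiW_le_quotient_general G w H
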